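/- There exists a constant C > 0 such that for every real k ≥ 1, all positive integers m, r with r ≤ m, and all integers α, β with 1 ≤ β ≤ α/2 ≤ r/2, the following holds. If k ≥ mr, then M(α,β) ≤ 2^{C·r} · (k²r/m)^{r/2}. If k < mr, then M(α,β) ≤ 2^{C·r} · max{ (r / ln(2emr/k))^{2r} , (k²r/m)^{r/2} }. -/

import Mathlib

/-!
Every factor of `M(α,β)` is paid for with powers of a weight `e^t`. The elementary bound
`x ≤ exp (x / e)` gives `(m/β)^β ≤ exp (m e^{-2t} / e) · e^{2tβ}` and
`(α - 2β)^n ≤ (n / (e t))^n · e^{t(α - 2β)}`, and the weights multiply to `e^{tα}`, so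
`M ≤ e^r · max (k r e^t / m, (2r / (e t))²)^r` whenever `m ≤ r e^{2t}`.
For `k ≥ mr` take `e^{2t} = e² m / r`. Otherwise let `L = log (2emr/k)` and take
`e^{2t} = max (m / r, e^L)`: in the first case `k r e^t / m = √(k² r / m)`, in the second
`k r e^t / m = 2 e r² e^{-L/2} ≤ (32/e) (r/L)²`.
-/

open scoped BigOperators
noncomputable section

namespace FH

/-- `M(α,β) = (m/β)^β · (kα/m)^α · (α−2β)^{2r−2α}` (with `0⁰ = 1`). -/
def Mfun (m r : ℕ) (k : ℝ) (α β : ℕ) : ℝ :=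
  ((m:ℝ)/β)^β * (k*α/m)^α * ((α:ℝ) - 2*β)^(2*r - 2*α)

/-- `N(α,β) = (m/β)^β · (kα/m)^α · (α−β)^{r−α}`. -/
def Nfun (m r : ℕ) (k : ℝ) (α β : ℕ) : ℝ :=
  ((m:ℝ)/β)^β * (k*α/m)^α * ((α:ℝ) - β)^(r - α)

open Real

lemma le_exp_div_exp_one (x : ℝ) : x ≤ exp (x / exp 1) := by
  have h := add_one_le_exp (x / exp 1 - 1)
  rw [sub_add_cancel, exp_sub] at h
  exact (div_le_div_iff_of_pos_right (exp_pos 1)).1 h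

lemma pow_le_exp_mul_div_exp_one {x : ℝ} (hx : 0 ≤ x) (n : ℕ) :
    x ^ n ≤ exp (n * x / exp 1) :=
  calc x ^ n ≤ exp (x / exp 1) ^ n := pow_le_pow_left₀ hx (le_exp_div_exp_one x) n
    _ = exp (n * x / exp 1) := by rw [← exp_nat_mul, mul_div_assoc]

lemma div_pow_self_le_exp {c : ℝ} (hc : 0 ≤ c) (n : ℕ) : (c / n) ^ n ≤ exp (c / exp 1) := by
  rcases n.eq_zero_or_pos with rfl | hn
  · simpa using one_le_exp (div_nonneg hc (exp_pos 1).le)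
  · calc (c / n) ^ n ≤ exp (n * (c / n) / exp 1) := pow_le_exp_mul_div_exp_one (by positivity) n
      _ = exp (c / exp 1) := by rw [mul_div_cancel₀ c (by positivity)]

lemma pow_le_div_pow_mul_exp {x t : ℝ} (hx : 0 ≤ x) (ht : 0 < t) (n : ℕ) :
    x ^ n ≤ (n / (exp 1 * t)) ^ n * exp (t * x) := by
  rcases n.eq_zero_or_pos with rfl | hn
  · simpa using one_le_exp (mul_nonneg ht.le hx)
  · have hx_eq : x = n / (exp 1 * t) * (exp 1 * t * x / n) := by field_simp
    calc x ^ n = (n / (exp 1 * t)) ^ n * (exp 1 * t * x / n) ^ n := by rw [← mul_pow, ← hx_eq]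
      _ ≤ (n / (exp 1 * t)) ^ n * exp (n * (exp 1 * t * x / n) / exp 1) := by
        gcongr
        exact pow_le_exp_mul_div_exp_one (by positivity) n
      _ = (n / (exp 1 * t)) ^ n * exp (t * x) := by congr 2; field_simp

lemma sq_rpow_natCast_div_two {x : ℝ} (hx : 0 ≤ x) (r : ℕ) : (x ^ 2) ^ ((r:ℝ) / 2) = x ^ r := by
  rw [← rpow_natCast_mul hx, Nat.cast_ofNat, mul_div_cancel₀ _ two_ne_zero, rpow_natCast]

lemma Mfun_le_exp_mul_pow_mul_pow {m r α β : ℕ} {k t : ℝ} (hk : 0 ≤ k) (hβα : 2 * β ≤ α)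
    (hαr : α ≤ r) (ht : 0 < t) :
    Mfun m r k α β ≤ exp (m * exp (-(2 * t)) / exp 1) * (k * r * exp t / m) ^ α *
      ((2 * r / (exp 1 * t)) ^ 2) ^ (r - α) := by
  have hg : ((α - 2 * β : ℕ) : ℝ) = α - 2 * β := by push_cast [hβα]; ring
  have hm_div : ((m:ℝ) / β) ^ β ≤ exp (m * exp (-(2 * t)) / exp 1) * exp t ^ (2 * β) := by
    have hm_eq : (m:ℝ) / β = m * exp (-(2 * t)) / β * exp t ^ 2 := by
      rw [← exp_nat_mul, mul_div_right_comm, mul_assoc, ← exp_add]; norm_num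
    rw [hm_eq, mul_pow, ← pow_mul]
    gcongr
    exact div_pow_self_le_exp (by positivity) β
  have hkα : (k * α / m) ^ α ≤ (k * r / m) ^ α := by gcongr
  have hgap : ((α:ℝ) - 2 * β) ^ (2 * r - 2 * α) ≤
      ((2 * r / (exp 1 * t)) ^ 2) ^ (r - α) * exp t ^ (α - 2 * β) := by
    rw [← hg, show 2 * r - 2 * α = 2 * (r - α) by omega]
    refine (pow_le_div_pow_mul_exp (Nat.cast_nonneg _) ht _).trans ?_
    rw [← exp_nat_mul, mul_comm t, pow_mul]
    gcongr
    push_cast [Nat.cast_sub hαr]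
    linarith
  calc Mfun m r k α β
      ≤ exp (m * exp (-(2 * t)) / exp 1) * exp t ^ (2 * β) * (k * r / m) ^ α *
          (((2 * r / (exp 1 * t)) ^ 2) ^ (r - α) * exp t ^ (α - 2 * β)) := by
        unfold Mfun
        gcongr
        rw [← hg]
        positivity
    _ = exp (m * exp (-(2 * t)) / exp 1) * (k * r / m * exp t) ^ α *
          ((2 * r / (exp 1 * t)) ^ 2) ^ (r - α) := by
        rw [mul_pow, ← pow_mul_pow_sub (exp t) hβα]
        ring
    _ = exp (m * exp (-(2 * t)) / exp 1) * (k * r * exp t / m) ^ α *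
          ((2 * r / (exp 1 * t)) ^ 2) ^ (r - α) := by
        rw [div_mul_eq_mul_div]

lemma Mfun_le_exp_mul_max_pow {m r α β : ℕ} {k t : ℝ} (hk : 0 ≤ k) (hβα : 2 * β ≤ α)
    (hαr : α ≤ r) (ht : 0 < t) (hmt : (m:ℝ) ≤ r * exp (2 * t)) :
    Mfun m r k α β ≤ exp 1 ^ r * max (k * r * exp t / m) ((2 * r / (exp 1 * t)) ^ 2) ^ r := by
  set W := max (k * r * exp t / m) ((2 * r / (exp 1 * t)) ^ 2)
  have hweight : exp (m * exp (-(2 * t)) / exp 1) ≤ exp 1 ^ r := by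
    rw [← exp_nat_mul, mul_one, exp_le_exp]
    have hm_le : m * exp (-(2 * t)) ≤ r := by
      rw [exp_neg, ← div_eq_mul_inv, div_le_iff₀ (exp_pos _)]
      exact hmt
    exact (div_le_self (by positivity) (one_le_exp zero_le_one)).trans hm_le
  calc Mfun m r k α β
      ≤ exp (m * exp (-(2 * t)) / exp 1) * (k * r * exp t / m) ^ α *
          ((2 * r / (exp 1 * t)) ^ 2) ^ (r - α) := Mfun_le_exp_mul_pow_mul_pow hk hβα hαr ht
    _ ≤ exp 1 ^ r * W ^ α * W ^ (r - α) := by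
        gcongr
        exacts [le_max_left _ _, le_max_right _ _]
    _ = exp 1 ^ r * W ^ r := by rw [mul_assoc, pow_mul_pow_sub W hαr]

lemma Mfun_le_of_mul_le {m r α β : ℕ} {k : ℝ} (hr : 0 < r) (hrm : r ≤ m) (hβα : 2 * β ≤ α)
    (hαr : α ≤ r) (hmk : (m:ℝ) * r ≤ k) :
    Mfun m r k α β ≤ (exp 1 ^ 2) ^ r * (k ^ 2 * r / m) ^ ((r:ℝ) / 2) := by
  have hr' : (0:ℝ) < r := by exact_mod_cast hr
  have hm' : (0:ℝ) < m := by exact_mod_cast hr.trans_le hrm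
  have hk : 0 ≤ k := (mul_pos hm' hr').le.trans hmk
  have hmr : 1 ≤ (m:ℝ) / r := by rw [one_le_div hr']; exact_mod_cast hrm
  set t := 1 + log (m / r) / 2 with ht_def
  have ht : 1 ≤ t := by linarith [log_nonneg hmr]
  have hexp : exp (2 * t) = exp 1 ^ 2 * (m / r) := by
    rw [show 2 * t = 2 + log (m / r) by ring, exp_add, exp_log (by positivity), sq, ← exp_add,
      one_add_one_eq_two]
  have hmt : (m:ℝ) ≤ r * exp (2 * t) :=
    calc (m:ℝ) ≤ exp 1 ^ 2 * m :=
          le_mul_of_one_le_left hm'.le (one_le_pow₀ (one_le_exp zero_le_one))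
      _ = r * exp (2 * t) := by rw [hexp]; field_simp
  set X := k * r * exp t / m
  have hX_sq : X ^ 2 = exp 1 ^ 2 * (k ^ 2 * r / m) := by
    rw [div_pow, mul_pow, mul_pow, ← exp_nat_mul, Nat.cast_ofNat, hexp]
    field_simp
  have hY : (2 * r / (exp 1 * t)) ^ 2 ≤ X := by
    have hY_le : 2 * r / (exp 1 * t) ≤ r := by
      rw [div_le_iff₀ (by positivity)]
      nlinarith [exp_one_gt_d9, mul_le_mul_of_nonneg_left ht (exp_pos 1).le]
    calc (2 * r / (exp 1 * t)) ^ 2 ≤ (r:ℝ) ^ 2 * 1 := by rw [mul_one]; gcongr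
      _ ≤ k * r / m * exp t := by
        gcongr
        · rw [le_div_iff₀ hm']; nlinarith
        · exact one_le_exp (by linarith)
      _ = X := div_mul_eq_mul_div _ _ _
  calc Mfun m r k α β ≤ exp 1 ^ r * max X ((2 * r / (exp 1 * t)) ^ 2) ^ r :=
        Mfun_le_exp_mul_max_pow hk hβα hαr (by linarith) hmt
    _ = exp 1 ^ r * (X ^ 2) ^ ((r:ℝ) / 2) := by
        rw [max_eq_left hY, sq_rpow_natCast_div_two (by positivity)]
    _ = (exp 1 ^ 2) ^ r * (k ^ 2 * r / m) ^ ((r:ℝ) / 2) := by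
        rw [hX_sq, mul_rpow (by positivity) (by positivity),
          sq_rpow_natCast_div_two (exp_pos 1).le, ← mul_assoc, ← mul_pow, ← sq]

lemma two_mul_div_exp_one_mul_sq_le {a t L : ℝ} (hL : 0 < L) (hLt : L / 2 ≤ t) :
    (2 * a / (exp 1 * t)) ^ 2 ≤ 32 / exp 1 * (a / L) ^ 2 :=
  calc (2 * a / (exp 1 * t)) ^ 2 = (2 / (exp 1 * t)) ^ 2 * a ^ 2 := by ring
    _ ≤ (2 / (exp 1 * (L / 2))) ^ 2 * a ^ 2 := by
        have : 0 < t := by linarith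
        gcongr
    _ = 16 / exp 1 * (1 / exp 1) * (a / L) ^ 2 := by field_simp; ring
    _ ≤ 16 / exp 1 * 2 * (a / L) ^ 2 := by
        gcongr
        rw [div_le_iff₀ (exp_pos 1)]
        nlinarith [exp_one_gt_d9]
    _ = 32 / exp 1 * (a / L) ^ 2 := by ring

lemma mul_exp_half_div_le {k m r L : ℝ} (hm : 0 < m) (hL : 0 < L)
    (hkL : k * exp L = 2 * exp 1 * m * r) :
    k * r * exp (L / 2) / m ≤ 32 / exp 1 * (r / L) ^ 2 := by
  have hk_exp : k * exp (L / 2) ^ 2 = 2 * exp 1 * m * r := by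
    rw [← exp_nat_mul, Nat.cast_ofNat, mul_div_cancel₀ _ two_ne_zero, hkL]
  have hL_exp : (exp 1 * L / 4) ^ 2 ≤ exp (L / 2) := by
    calc (exp 1 * L / 4) ^ 2 ≤ exp (L / 4) ^ 2 := by
          gcongr
          simpa [mul_div_assoc, mul_div_cancel_left₀ _ (exp_pos 1).ne'] using
            le_exp_div_exp_one (exp 1 * L / 4)
      _ = exp (L / 2) := by rw [← exp_nat_mul]; ring_nf
  calc k * r * exp (L / 2) / m = 2 * exp 1 * r ^ 2 / exp (L / 2) := by
        field_simp
        linear_combination r * hk_exp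
    _ ≤ 2 * exp 1 * r ^ 2 / (exp 1 * L / 4) ^ 2 := by gcongr
    _ = 32 / exp 1 * (r / L) ^ 2 := by field_simp; ring

lemma Mfun_le_32_pow_mul {m r α β : ℕ} {k t L T : ℝ} (hk : 0 ≤ k) (hβα : 2 * β ≤ α)
    (hαr : α ≤ r) (hL : 0 < L) (hLt : L / 2 ≤ t) (hmt : (m:ℝ) ≤ r * exp (2 * t))
    (hT : (r / L) ^ (2 * r) ≤ T) (hX : (k * r * exp t / m) ^ r ≤ (32 / exp 1) ^ r * T) :
    Mfun m r k α β ≤ 32 ^ r * T := by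
  have hY : ((2 * r / (exp 1 * t)) ^ 2) ^ r ≤ (32 / exp 1) ^ r * T :=
    calc ((2 * r / (exp 1 * t)) ^ 2) ^ r ≤ (32 / exp 1 * (r / L) ^ 2) ^ r := by
          gcongr
          exact two_mul_div_exp_one_mul_sq_le hL hLt
      _ = (32 / exp 1) ^ r * (r / L) ^ (2 * r) := by rw [mul_pow, ← pow_mul]
      _ ≤ (32 / exp 1) ^ r * T := by gcongr
  calc Mfun m r k α β
      ≤ exp 1 ^ r * max (k * r * exp t / m) ((2 * r / (exp 1 * t)) ^ 2) ^ r :=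
        Mfun_le_exp_mul_max_pow hk hβα hαr (by linarith) hmt
    _ ≤ exp 1 ^ r * ((32 / exp 1) ^ r * T) := by
        gcongr
        rcases max_choice (k * r * exp t / m) ((2 * r / (exp 1 * t)) ^ 2) with h | h <;>
          rw [h] <;> assumption
    _ = 32 ^ r * T := by rw [← mul_assoc, ← mul_pow, mul_div_cancel₀ _ (exp_pos 1).ne']

lemma Mfun_le_of_lt_mul {m r α β : ℕ} {k : ℝ} (hk : 0 < k) (hβα : 2 * β ≤ α) (hαr : α ≤ r)
    (hkm : k < m * r) :
    Mfun m r k α β ≤ 32 ^ r *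
      max ((r / log (2 * exp 1 * m * r / k)) ^ (2 * r)) ((k ^ 2 * r / m) ^ ((r:ℝ) / 2)) := by
  set L := log (2 * exp 1 * m * r / k) with hL_def
  set T := max ((r / L) ^ (2 * r)) ((k ^ 2 * r / m) ^ ((r:ℝ) / 2))
  have hmr_pos : (0:ℝ) < m * r := hk.trans hkm
  have hr' : (0:ℝ) < r := pos_of_mul_pos_right hmr_pos (Nat.cast_nonneg m)
  have hm' : (0:ℝ) < m := pos_of_mul_pos_left hmr_pos hr'.le
  have hL : 1 < L := by
    rw [hL_def, lt_log_iff_exp_lt (by positivity), lt_div_iff₀ hk]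
    nlinarith [exp_pos 1]
  have hT : (r / L) ^ (2 * r) ≤ T := le_max_left _ _
  rcases le_total L (log (m / r)) with hLmr | hmrL
  · have hexp : exp (log (m / r) / 2) ^ 2 = m / r := by
      rw [← exp_nat_mul, Nat.cast_ofNat, mul_div_cancel₀ _ two_ne_zero, exp_log (by positivity)]
    refine Mfun_le_32_pow_mul (t := log (m / r) / 2) hk.le hβα hαr (by linarith) (by linarith) ?_
      hT ?_
    · rw [mul_div_cancel₀ _ two_ne_zero, exp_log (by positivity), mul_div_cancel₀ _ hr'.ne']
    · have hX_sq : (k * r * exp (log (m / r) / 2) / m) ^ 2 = k ^ 2 * r / m := by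
        rw [div_pow, mul_pow, hexp]
        field_simp
      calc (k * r * exp (log (m / r) / 2) / m) ^ r = (k ^ 2 * r / m) ^ ((r:ℝ) / 2) := by
            rw [← hX_sq, sq_rpow_natCast_div_two (by positivity)]
        _ ≤ T := le_max_right _ _
        _ ≤ (32 / exp 1) ^ r * T := by
            refine le_mul_of_one_le_left (by positivity) (one_le_pow₀ ?_)
            rw [le_div_iff₀ (exp_pos 1)]
            nlinarith [exp_one_lt_d9]
  · refine Mfun_le_32_pow_mul hk.le hβα hαr (by linarith) le_rfl ?_ hT ?_
    · rw [mul_div_cancel₀ _ two_ne_zero, ← div_le_iff₀' hr', ← exp_log (div_pos hm' hr')]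
      exact exp_le_exp.2 hmrL
    · have hkL : k * exp L = 2 * exp 1 * m * r := by
        rw [exp_log (by positivity)]
        field_simp
      calc (k * r * exp (L / 2) / m) ^ r ≤ (32 / exp 1 * (r / L) ^ 2) ^ r := by
            gcongr
            exact mul_exp_half_div_le hm' (by linarith) hkL
        _ = (32 / exp 1) ^ r * (r / L) ^ (2 * r) := by rw [mul_pow, ← pow_mul]
        _ ≤ (32 / exp 1) ^ r * T := by gcongr

theorem Mfun_bound :
    ∃ C : ℝ, 0 < C ∧
      ∀ k : ℝ, 1 ≤ k → ∀ m r : ℕ, 0 < m → 0 < r → r ≤ m →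
        ∀ α β : ℕ, 1 ≤ β → 2*β ≤ α → α ≤ r →
          ((m:ℝ) * r ≤ k →
            Mfun m r k α β ≤ (2:ℝ)^(C * r) * (k^2 * r / m)^((r:ℝ)/2)) ∧
          (k < (m:ℝ) * r →
            Mfun m r k α β ≤ (2:ℝ)^(C * r) *
              max (((r:ℝ) / Real.log (2 * Real.exp 1 * m * r / k))^(2*r))
                ((k^2 * r / m)^((r:ℝ)/2))) := by
  refine ⟨5, by norm_num, fun k hk m r _ hr hrm α β _ hβα hαr => ⟨fun hmk => ?_, fun hkm => ?_⟩⟩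
  all_goals rw [rpow_mul (by norm_num), show (2:ℝ) ^ (5:ℝ) = 32 by norm_num, rpow_natCast]
  · calc Mfun m r k α β ≤ (exp 1 ^ 2) ^ r * (k ^ 2 * r / m) ^ ((r:ℝ) / 2) :=
          Mfun_le_of_mul_le hr hrm hβα hαr hmk
      _ ≤ 32 ^ r * (k ^ 2 * r / m) ^ ((r:ℝ) / 2) := by
          gcongr
          nlinarith [exp_one_lt_d9, exp_pos 1]
  · exact Mfun_le_of_lt_mul (by linarith) hβα hαr hkm

end FH
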